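/- Let ρ : M° ⇒ M be a morphism of monads that is dense over a class C of M-algebras closed under binary products. Then: (a) any two algebras in C with the same M°-reduct have equal products (are isomorphic via the identity); (b) every M°-algebra morphism between the M°-reducts of two algebras in C is also a morphism of M-algebras; (c) a relation ⊑ is a congruence ordering on an algebra A ∈ C if and only if it is a congruence ordering on the M°-reduct of A. -/

import Mathlib

/-- An object of `Pos`: a type equipped with a partial order. -/
structure Pos : Type 1 where
  car : Type
  po : PartialOrder car

attribute [instance] Pos.po

/-- Monotone maps between objects of `Pos`. -/
structure PHom (A B : Pos) where
  f : A.car → B.car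
  mono : Monotone f

def PHom.id (A : Pos) : PHom A A := ⟨fun a => a, fun _ _ h => h⟩

def PHom.comp {A B C : Pos} (g : PHom B C) (f : PHom A B) : PHom A C :=
  ⟨fun a => g.f (f.f a), fun _ _ h => g.mono (f.mono h)⟩

/-- A monad on the category `Pos` of partially ordered sets and monotone maps. -/
structure OMonad : Type 1 where
  obj : Pos → Pos
  map : {A B : Pos} → PHom A B → PHom (obj A) (obj B)
  map_id : ∀ A : Pos, map (PHom.id A) = PHom.id (obj A)
  map_comp : ∀ {A B C : Pos} (f : PHom A B) (g : PHom B C),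
      map (g.comp f) = (map g).comp (map f)
  sing : ∀ A : Pos, PHom A (obj A)
  flat : ∀ A : Pos, PHom (obj (obj A)) (obj A)
  sing_nat : ∀ {A B : Pos} (f : PHom A B), (map f).comp (sing A) = (sing B).comp f
  flat_nat : ∀ {A B : Pos} (f : PHom A B),
      (map f).comp (flat A) = (flat B).comp (map (map f))
  flat_sing : ∀ A, (flat A).comp (sing (obj A)) = PHom.id (obj A)
  flat_map_sing : ∀ A, (flat A).comp (map (sing A)) = PHom.id (obj A)
  flat_assoc : ∀ A, (flat A).comp (flat (obj A)) = (flat A).comp (map (flat A))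

/-- An Eilenberg–Moore algebra for the monad `M`. -/
structure OAlg (M : OMonad) where
  A : Pos
  pi : PHom (M.obj A) A
  unit_law : pi.comp (M.sing A) = PHom.id A
  assoc_law : pi.comp (M.map pi) = pi.comp (M.flat A)

/-- A morphism of Eilenberg–Moore algebras. -/
structure OAlgHom {M : OMonad} (X Y : OAlg M) where
  h : PHom X.A Y.A
  comm : h.comp X.pi = Y.pi.comp (M.map h)

def OAlgHom.comp {M : OMonad} {X Y Z : OAlg M} (g : OAlgHom Y Z) (f : OAlgHom X Y) :
    OAlgHom X Z :=
  ⟨g.h.comp f.h, by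
    calc (g.h.comp f.h).comp X.pi = g.h.comp (f.h.comp X.pi) := rfl
      _ = g.h.comp (Y.pi.comp (M.map f.h)) := by rw [f.comm]
      _ = (g.h.comp Y.pi).comp (M.map f.h) := rfl
      _ = (Z.pi.comp (M.map g.h)).comp (M.map f.h) := by rw [g.comm]
      _ = Z.pi.comp ((M.map g.h).comp (M.map f.h)) := rfl
      _ = Z.pi.comp (M.map (g.h.comp f.h)) := by rw [← M.map_comp]⟩

/-- The free `M`-algebra over `A`, carried by `M A` with product `flat`. -/
def OMonad.free (M : OMonad) (A : Pos) : OAlg M :=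
  ⟨M.obj A, M.flat A, M.flat_sing A, (M.flat_assoc A).symm⟩

/- Sub-posets, products, relations as sub-posets of products. -/

def Pos.sub (A : Pos) (S : Set A.car) : Pos := ⟨{a : A.car // a ∈ S}, inferInstance⟩

def subIncl (A : Pos) (S : Set A.car) : PHom (A.sub S) A := ⟨fun a => a.val, fun _ _ h => h⟩

def Pos.prod (A B : Pos) : Pos := ⟨A.car × B.car, inferInstance⟩

def prodFst (A B : Pos) : PHom (A.prod B) A := ⟨Prod.fst, fun _ _ h => h.1⟩
def prodSnd (A B : Pos) : PHom (A.prod B) B := ⟨Prod.snd, fun _ _ h => h.2⟩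

/-- A relation `r` on `A`, as a sub-poset of `A × A`. -/
def relPos (A : Pos) (r : A.car → A.car → Prop) : Pos :=
  ⟨{p : A.car × A.car // r p.1 p.2}, inferInstance⟩

def relFst (A : Pos) (r : A.car → A.car → Prop) : PHom (relPos A r) A :=
  ⟨fun p => p.val.1, fun _ _ h => h.1⟩
def relSnd (A : Pos) (r : A.car → A.car → Prop) : PHom (relPos A r) A :=
  ⟨fun p => p.val.2, fun _ _ h => h.2⟩

/- The standing convention on the monad `M`. -/

def PreservesInj (M : OMonad) : Prop :=
  ∀ {A B : Pos} (f : PHom A B), Function.Injective f.f → Function.Injective (M.map f).f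
def PreservesSurj (M : OMonad) : Prop :=
  ∀ {A B : Pos} (f : PHom A B), Function.Surjective f.f → Function.Surjective (M.map f).f
def PreservesBij (M : OMonad) : Prop :=
  ∀ {A B : Pos} (f : PHom A B), Function.Bijective f.f → Function.Bijective (M.map f).f
def PreservesPre (M : OMonad) : Prop :=
  ∀ {A B : Pos} (f : PHom A B) (S : Set B.car),
    Set.range (M.map (subIncl A (f.f ⁻¹' S))).f
      = (M.map f).f ⁻¹' Set.range (M.map (subIncl B S)).f

/-- `M` uses the standard ordering: the order on `M A` is the lift of the order on `A`. -/
def UsesStdOrder (M : OMonad) : Prop :=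
  ∀ (A : Pos) (s t : (M.obj A).car),
    s ≤ t ↔ ∃ u : (M.obj (relPos A (fun a b => a ≤ b))).car,
      (M.map (relFst A (fun a b => a ≤ b))).f u = s ∧
      (M.map (relSnd A (fun a b => a ≤ b))).f u = t

/-- The standing convention of the paper. -/
def Convention (M : OMonad) : Prop :=
  PreservesInj M ∧ PreservesSurj M ∧ PreservesBij M ∧ PreservesPre M ∧ UsesStdOrder M

/- Quotients by preorders containing the order. -/

/-- A preorder on (the carrier of) `A` containing the partial order of `A`. -/
structure PreCong (A : Pos) where
  r : A.car → A.car → Prop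
  refl : ∀ a, r a a
  trans : ∀ a b c, r a b → r b c → r a c
  le_sub : ∀ a b : A.car, a ≤ b → r a b

def PreCong.setoid {A : Pos} (co : PreCong A) : Setoid A.car where
  r a b := co.r a b ∧ co.r b a
  iseqv := ⟨fun a => ⟨co.refl a, co.refl a⟩, fun h => ⟨h.2, h.1⟩,
    fun h1 h2 => ⟨co.trans _ _ _ h1.1 h2.1, co.trans _ _ _ h2.2 h1.2⟩⟩

/-- The quotient poset `A/⊑`. -/
def quotPos {A : Pos} (co : PreCong A) : Pos where
  car := Quotient co.setoid
  po :=
    { le := Quotient.lift₂ co.r (fun a b a' b' ha hb => propext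
        ⟨fun h => co.trans _ _ _ ha.2 (co.trans _ _ _ h hb.1),
         fun h => co.trans _ _ _ ha.1 (co.trans _ _ _ h hb.2)⟩)
      le_refl := fun q => Quotient.inductionOn q co.refl
      le_trans := by
        intro q1 q2 q3
        refine Quotient.inductionOn₃ q1 q2 q3 ?_
        intro a b d h1 h2
        exact co.trans a b d h1 h2
      le_antisymm := by
        intro q1 q2
        refine Quotient.inductionOn₂ q1 q2 ?_
        intro a b h1 h2
        exact Quotient.sound ⟨h1, h2⟩
      lt := fun x y => Quotient.lift₂ (s₁ := co.setoid) (s₂ := co.setoid) co.r (fun a b a' b' ha hb => propext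
          ⟨fun h => co.trans _ _ _ ha.2 (co.trans _ _ _ h hb.1),
           fun h => co.trans _ _ _ ha.1 (co.trans _ _ _ h hb.2)⟩) x y ∧
          ¬ Quotient.lift₂ (s₁ := co.setoid) (s₂ := co.setoid) co.r (fun a b a' b' ha hb => propext
          ⟨fun h => co.trans _ _ _ ha.2 (co.trans _ _ _ h hb.1),
           fun h => co.trans _ _ _ ha.1 (co.trans _ _ _ h hb.2)⟩) y x }

/-- The quotient map `A → A/⊑`. -/
def quotHom {A : Pos} (co : PreCong A) : PHom A (quotPos co) :=
  ⟨fun a => Quotient.mk co.setoid a, fun a b h => co.le_sub a b h⟩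

/-- `⊑` is a congruence ordering on the algebra `X`:
`s ⊑_M t` (i.e. `M q (s) ≤ M q (t)`) implies `π(s) ⊑ π(t)`. -/
def IsCongOrdP (M : OMonad) (X : OAlg M) (co : PreCong X.A) : Prop :=
  ∀ s t : (M.obj X.A).car,
    (M.map (quotHom co)).f s ≤ (M.map (quotHom co)).f t → co.r (X.pi.f s) (X.pi.f t)

/-- The relation `r` is a congruence ordering on the algebra `X`. -/
def IsCongruenceOrdering (M : OMonad) (X : OAlg M) (r : X.A.car → X.A.car → Prop) : Prop :=
  ∃ (h1 : ∀ a, r a a) (h2 : ∀ a b c, r a b → r b c → r a c)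
    (h3 : ∀ a b : X.A.car, a ≤ b → r a b),
    IsCongOrdP M X ⟨r, h1, h2, h3⟩

/- Contexts and syntactic congruences. -/

/-- `A + □`: the poset `A` extended by a single extra point `□`. -/
def Pos.addBox (A : Pos) : Pos := ⟨A.car ⊕ PUnit, inferInstance⟩

/-- The map `A + □ → A` substituting `a` for `□`. -/
def substHom (M : OMonad) (X : OAlg M) (a : X.A.car) : PHom X.A.addBox X.A :=
  ⟨fun z => Sum.elim (fun x => x) (fun _ => a) z, by
    intro x y h
    cases h with
    | inl h => exact h
    | inr h => exact le_refl a⟩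

/-- Evaluation `p[a]` of a context `p ∈ M(A + □)` at `a ∈ A`. -/
def ctxEval (M : OMonad) (X : OAlg M) (p : (M.obj X.A.addBox).car) (a : X.A.car) : X.A.car :=
  X.pi.f ((M.map (substHom M X a)).f p)

/-- The syntactic congruence `a ≼_K b` of a set `K`. -/
def synLe (M : OMonad) (X : OAlg M) (K : Set X.A.car) (a b : X.A.car) : Prop :=
  ∀ p : (M.obj X.A.addBox).car, ctxEval M X p a ∈ K → ctxEval M X p b ∈ K

def UpClosed (A : Pos) (K : Set A.car) : Prop :=
  ∀ a b : A.car, a ∈ K → a ≤ b → b ∈ K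

/-- The derivative `p⁻¹[K]` of `K` by the context `p`. -/
def ctxDeriv (M : OMonad) (X : OAlg M) (p : (M.obj X.A.addBox).car) (K : Set X.A.car) :
    Set X.A.car :=
  {a | ctxEval M X p a ∈ K}

/-- `A` carries the trivial (discrete) order. -/
def TrivOrder (A : Pos) : Prop := ∀ a b : A.car, a ≤ b → a = b

/-- A morphism from a free algebra recognises a language `K` if `K` is the preimage of
an upwards closed set. -/
def Recognises {M : OMonad} {Sg : Pos} {X : OAlg M} (φ : OAlgHom (M.free Sg) X)
    (K : Set ((M.obj Sg).car)) : Prop :=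
  ∃ P : Set X.A.car, UpClosed X.A P ∧ K = φ.h.f ⁻¹' P

/-- Embedding of `Σ + □` into `(M Σ) + □` via `sing`, used to view contexts over the
alphabet as contexts over the free algebra. -/
def singBox (M : OMonad) (Sg : Pos) : PHom Sg.addBox (M.obj Sg).addBox :=
  ⟨Sum.map (M.sing Sg).f (fun x => x), by
    intro x y h
    cases h with
    | inl h => exact Sum.LiftRel.inl ((M.sing Sg).mono h)
    | inr h => exact Sum.LiftRel.inr h⟩

/-- Evaluation of a context `p ∈ M(Σ + □)` at an element `s ∈ M Σ` of the free algebra. -/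
def freeCtxEval (M : OMonad) (Sg : Pos) (p : (M.obj Sg.addBox).car) (s : (M.obj Sg).car) :
    (M.obj Sg).car :=
  ctxEval M (M.free Sg) ((M.map (singBox M Sg)).f p) s

/- Finitary monads and algebras. -/

/-- `M` is finitary: it preserves directed unions. -/
def FinitaryM (M : OMonad) : Prop :=
  ∀ (A : Pos) (ι : Type) (D : ι → Set A.car), Directed (· ⊆ ·) D → (⋃ i, D i) = Set.univ →
    ∀ s : (M.obj A).car, ∃ i, ∃ s₀ : (M.obj (A.sub (D i))).car,
      (M.map (subIncl A (D i))).f s₀ = s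

/-- A finitary algebra: (sort-wise) finite universe and finitely generated. -/
def FinitaryAlg (M : OMonad) (X : OAlg M) : Prop :=
  Finite X.A.car ∧ ∃ C : Set X.A.car, C.Finite ∧
    ∀ a : X.A.car, ∃ s : (M.obj (X.A.sub C)).car, a = X.pi.f ((M.map (subIncl X.A C)).f s)
/-- A morphism of monads `M₀ ⇒ M₁`. -/
structure OMonadHom (M₀ M₁ : OMonad) where
  app : ∀ A : Pos, PHom (M₀.obj A) (M₁.obj A)
  naturality : ∀ {A B : Pos} (f : PHom A B),
      (app B).comp (M₀.map f) = (M₁.map f).comp (app A)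
  sing_comm : ∀ A : Pos, (app A).comp (M₀.sing A) = M₁.sing A
  flat_comm : ∀ A : Pos,
      (app A).comp (M₀.flat A)
        = (M₁.flat A).comp ((app (M₁.obj A)).comp (M₀.map (app A)))

/-- The `ρ`-reduct of an `M₁`-algebra: the `M₀`-algebra with product `π ∘ ρ`. -/
def OMonadHom.reduct {M₀ M₁ : OMonad} (ρ : OMonadHom M₀ M₁) (X : OAlg M₁) : OAlg M₀ where
  A := X.A
  pi := X.pi.comp (ρ.app X.A)
  unit_law := by
    calc (X.pi.comp (ρ.app X.A)).comp (M₀.sing X.A)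
        = X.pi.comp ((ρ.app X.A).comp (M₀.sing X.A)) := rfl
      _ = X.pi.comp (M₁.sing X.A) := by rw [ρ.sing_comm]
      _ = PHom.id X.A := X.unit_law
  assoc_law := by
    have hnat := ρ.naturality (X.pi.comp (ρ.app X.A))
    have hint := ρ.naturality (ρ.app X.A)
    calc (X.pi.comp (ρ.app X.A)).comp (M₀.map (X.pi.comp (ρ.app X.A)))
        = X.pi.comp ((ρ.app X.A).comp (M₀.map (X.pi.comp (ρ.app X.A)))) := rfl
      _ = X.pi.comp ((M₁.map (X.pi.comp (ρ.app X.A))).comp (ρ.app (M₀.obj X.A))) := by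
            rw [hnat]
      _ = (X.pi.comp (M₁.map (X.pi.comp (ρ.app X.A)))).comp (ρ.app (M₀.obj X.A)) := rfl
      _ = (X.pi.comp ((M₁.map X.pi).comp (M₁.map (ρ.app X.A)))).comp (ρ.app (M₀.obj X.A)) := by
            rw [M₁.map_comp]
      _ = ((X.pi.comp (M₁.map X.pi)).comp (M₁.map (ρ.app X.A))).comp (ρ.app (M₀.obj X.A)) := rfl
      _ = ((X.pi.comp (M₁.flat X.A)).comp (M₁.map (ρ.app X.A))).comp (ρ.app (M₀.obj X.A)) := by
            rw [X.assoc_law]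
      _ = X.pi.comp ((M₁.flat X.A).comp ((M₁.map (ρ.app X.A)).comp (ρ.app (M₀.obj X.A)))) := rfl
      _ = X.pi.comp ((M₁.flat X.A).comp ((ρ.app (M₁.obj X.A)).comp (M₀.map (ρ.app X.A)))) := by
            rw [hint]
      _ = X.pi.comp ((ρ.app X.A).comp (M₀.flat X.A)) := by rw [← ρ.flat_comm]
      _ = (X.pi.comp (ρ.app X.A)).comp (M₀.flat X.A) := rfl

/-- `ρ : M₀ ⇒ M₁` is dense over the class `C`. -/
def DenseOver {M₀ M₁ : OMonad} (ρ : OMonadHom M₀ M₁) (C : Set (OAlg M₁)) : Prop :=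
  ∀ X ∈ C, ∀ (S : Set X.A.car) (s : (M₁.obj (X.A.sub S)).car),
    ∃ s₀ : (M₀.obj (X.A.sub S)).car,
      X.pi.f ((ρ.app X.A).f ((M₀.map (subIncl X.A S)).f s₀))
        = X.pi.f ((M₁.map (subIncl X.A S)).f s)

/-- `P` is a binary product of `A` and `B` in the category of `M`-algebras
(concretely: the projections induce an order isomorphism with the product poset). -/
def IsBinProd (M : OMonad) (P A B : OAlg M) : Prop :=
  ∃ (pa : OAlgHom P A) (pb : OAlgHom P B),
    Function.Bijective (fun x => (pa.h.f x, pb.h.f x)) ∧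
    ∀ x y : P.A.car, x ≤ y ↔ (pa.h.f x ≤ pa.h.f y ∧ pb.h.f x ≤ pb.h.f y)

/-- Closure of a class of algebras under binary products. -/
inductive InProdClosure (M : OMonad) (C : Set (OAlg M)) : OAlg M → Prop
  | base : ∀ A ∈ C, InProdClosure M C A
  | prod : ∀ A B P, InProdClosure M C A → InProdClosure M C B →
      IsBinProd M P A B → InProdClosure M C P

/-- `P` is a product of the family `A` of `M`-algebras. -/
def IsProdOf (M : OMonad) (P : OAlg M) {I : Type} (A : I → OAlg M) : Prop :=
  ∃ p : ∀ i, OAlgHom P (A i),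
    Function.Bijective (fun (x : P.A.car) (i : I) => (p i).h.f x) ∧
    ∀ x y : P.A.car, x ≤ y ↔ ∀ i, (p i).h.f x ≤ (p i).h.f y

/-- `B` is a quotient of `A`. -/
def IsQuotientOf (M : OMonad) (B A : OAlg M) : Prop :=
  ∃ φ : OAlgHom A B, Function.Surjective φ.h.f

/-- `B` is a subalgebra of `A` (an order embedding which is a morphism). -/
def IsSubalgebraOf (M : OMonad) (B A : OAlg M) : Prop :=
  ∃ φ : OAlgHom B A, ∀ x y : B.A.car, φ.h.f x ≤ φ.h.f y ↔ x ≤ y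

/-- A pseudo-variety (here with a single sort): a class of finitary algebras closed
under quotients, finitary subalgebras of finite products, and (the single-sorted
instance of) sort-accumulation points. -/
def PseudoVariety (M : OMonad) (V : Set (OAlg M)) : Prop :=
  (∀ X ∈ V, FinitaryAlg M X) ∧
  (∀ A ∈ V, ∀ B, IsQuotientOf M B A → B ∈ V) ∧
  (∀ (n : ℕ) (A : Fin n → OAlg M), (∀ i, A i ∈ V) →
    ∀ P, IsProdOf M P A → ∀ B, FinitaryAlg M B → IsSubalgebraOf M B P → B ∈ V) ∧
  (∀ B, FinitaryAlg M B → (∃ A ∈ V, IsQuotientOf M A B) → B ∈ V)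

/-- The inclusion of a relation, as a sub-poset, into the product poset. -/
def relIncl (A : Pos) (r : A.car → A.car → Prop) : PHom (relPos A r) (A.prod A) :=
  ⟨fun p => p.val, fun _ _ h => h⟩


/-! The heart of the matter is (b). Let `φ` be a morphism of the reducts of `X, Y ∈ C` and
`s ∈ M₁ X`. Mapping `X` into the product `X × Y ∈ C` along `(id, φ)`, density (together with
`M₀` preserving surjections) yields `s° ∈ M₀ X` with `π(ρ s°) = π s` in `X` and
`π(ρ (M₀ φ s°)) = π (M₁ φ s)` in `Y`; hence `φ (π s) = φ (π (ρ s°)) = π (ρ (M₀ φ s°)) = π (M₁ φ s)`.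
Part (a) is (b) applied to the identity map.

For (c), a congruence ordering passes to the reduct by naturality of `ρ`. Conversely, let `q` be
the quotient map and `M₁ q s ≤ M₁ q t`. Using the convention, this is witnessed by some `w` in
`M₁` of the relation `{(a, b) | q a ≤ q b}`: in `M₁` of the collage `A + Q + A` of `q`, the
images of `s`, `M₁ q s`, `M₁ q t`, `t` form a chain, the standard order turns it into an element
of `M₁` of the order relation of the collage, and preservation of preimages and injections cuts
that down to the relation. Density over `X × X` replaces `w` by an element of `M₀` of the
relation with the same evaluations. -/

@[ext]
theorem PHom.ext {A B : Pos} {f g : PHom A B} (h : ∀ a, f.f a = g.f a) : f = g := by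
  cases f; cases g; congr; exact funext h

def PHom.rangeRestrict {A B : Pos} (f : PHom A B) : PHom A (B.sub (Set.range f.f)) :=
  ⟨fun a => ⟨f.f a, a, rfl⟩, fun _ _ h => f.mono h⟩

theorem subIncl_comp_rangeRestrict {A B : Pos} (f : PHom A B) :
    (subIncl B _).comp f.rangeRestrict = f :=
  rfl

namespace OMonad

variable (M : OMonad)

theorem map_comp_apply {A B C : Pos} (f : PHom A B) (g : PHom B C) (x : (M.obj A).car) :
    (M.map (g.comp f)).f x = (M.map g).f ((M.map f).f x) := by
  rw [M.map_comp]; rfl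

theorem map_id_apply (A : Pos) (x : (M.obj A).car) : (M.map (PHom.id A)).f x = x := by
  rw [M.map_id]; rfl

variable {M}

theorem map_le_map (hstd : UsesStdOrder M) {A B : Pos} {f g : PHom A B}
    (hfg : ∀ a, f.f a ≤ g.f a) (v : (M.obj A).car) : (M.map f).f v ≤ (M.map g).f v := by
  let pair : PHom A (relPos B (fun a b => a ≤ b)) :=
    ⟨fun a => ⟨(f.f a, g.f a), hfg a⟩, fun _ _ h => ⟨f.mono h, g.mono h⟩⟩
  refine (hstd B _ _).2 ⟨(M.map pair).f v, ?_, ?_⟩ <;> rw [← map_comp_apply] <;> rfl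

theorem exists_lift_of_map_eq (hpre : PreservesPre M) {T A B : Pos} (f : PHom T B)
    (i : PHom A B) {x : (M.obj T).car} {a : (M.obj A).car}
    (h : (M.map f).f x = (M.map i).f a) :
    ∃ y : (M.obj (T.sub (f.f ⁻¹' Set.range i.f))).car, (M.map (subIncl T _)).f y = x := by
  have hx : x ∈ (M.map f).f ⁻¹' Set.range (M.map (subIncl B (Set.range i.f))).f :=
    ⟨(M.map i.rangeRestrict).f a, by rw [← map_comp_apply, subIncl_comp_rangeRestrict, h]⟩
  rwa [← hpre] at hx

end OMonad

theorem OMonadHom.naturality_apply {M₀ M₁ : OMonad} (ρ : OMonadHom M₀ M₁) {A B : Pos}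
    (f : PHom A B) (x : (M₀.obj A).car) :
    (ρ.app B).f ((M₀.map f).f x) = (M₁.map f).f ((ρ.app A).f x) :=
  congrArg (·.f x) (ρ.naturality f)

theorem OAlgHom.comm_apply {M : OMonad} {X Y : OAlg M} (φ : OAlgHom X Y)
    (z : (M.obj X.A).car) : φ.h.f (X.pi.f z) = Y.pi.f ((M.map φ.h).f z) :=
  congrArg (·.f z) φ.comm

theorem OAlgHom.comm_reduct_apply {M₀ M₁ : OMonad} (ρ : OMonadHom M₀ M₁) {X Y : OAlg M₁}
    (φ : OAlgHom X Y) (z : (M₀.obj X.A).car) :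
    φ.h.f (X.pi.f ((ρ.app X.A).f z)) = Y.pi.f ((ρ.app Y.A).f ((M₀.map φ.h).f z)) := by
  rw [φ.comm_apply, ρ.naturality_apply]

section Collage

variable {A B Q : Pos} (f : PHom A Q) (g : PHom B Q)

def commaPos : Pos := ⟨{p : A.car × B.car // f.f p.1 ≤ g.f p.2}, inferInstance⟩

def commaFst : PHom (commaPos f g) A := ⟨fun p => p.val.1, fun _ _ h => h.1⟩
def commaSnd : PHom (commaPos f g) B := ⟨fun p => p.val.2, fun _ _ h => h.2⟩

def collageLe : A.car ⊕ Q.car ⊕ B.car → A.car ⊕ Q.car ⊕ B.car → Prop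
  | .inl a, .inl a' => a ≤ a'
  | .inl a, .inr (.inl c) => f.f a ≤ c
  | .inl a, .inr (.inr b) => f.f a ≤ g.f b
  | .inr (.inl c), .inr (.inl c') => c ≤ c'
  | .inr (.inl c), .inr (.inr b) => c ≤ g.f b
  | .inr (.inr b), .inr (.inr b') => b ≤ b'
  | _, _ => False

def collage : Pos where
  car := A.car ⊕ Q.car ⊕ B.car
  po :=
    { le := collageLe f g
      lt := fun x y => collageLe f g x y ∧ ¬collageLe f g y x
      lt_iff_le_not_ge := fun _ _ => Iff.rfl
      le_refl := by rintro (a | c | b) <;> exact le_refl _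
      le_trans := by
        rintro (a | c | b) (a' | c' | b') (a'' | c'' | b'') hxy hyz <;>
          first
            | exact False.elim hxy
            | exact False.elim hyz
            | exact le_trans hxy hyz
            | exact le_trans (f.mono hxy) hyz
            | exact le_trans hxy (g.mono hyz)
      le_antisymm := by
        rintro (a | c | b) (a' | c' | b') hxy hyx <;>
          first
            | exact False.elim hxy
            | exact False.elim hyx
            | rw [le_antisymm hxy hyx] }

def collage.inA : PHom A (collage f g) := ⟨Sum.inl, fun _ _ h => h⟩
def collage.inQ : PHom Q (collage f g) := ⟨Sum.inr ∘ Sum.inl, fun _ _ h => h⟩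
def collage.inB : PHom B (collage f g) := ⟨Sum.inr ∘ Sum.inr, fun _ _ h => h⟩

-- Cut out in two steps, since `PreservesPre` pulls back along one map at a time.
abbrev collageCut : Pos :=
  let R := relPos (collage f g) (fun x y => x ≤ y)
  let R₁ := R.sub ((relFst _ _).f ⁻¹' Set.range (collage.inA f g).f)
  R₁.sub (((relSnd _ _).comp (subIncl R _)).f ⁻¹' Set.range (collage.inB f g).f)

namespace collageCut

variable {f g}

noncomputable def fstA (z : (collageCut f g).car) : A.car :=
  (show ∃ a, (collage.inA f g).f a = z.1.1.1.1 from z.1.2).choose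

noncomputable def sndB (z : (collageCut f g).car) : B.car :=
  (show ∃ b, (collage.inB f g).f b = z.1.1.1.2 from z.2).choose

theorem inA_fstA (z : (collageCut f g).car) : (collage.inA f g).f (fstA z) = z.1.1.1.1 :=
  (show ∃ a, (collage.inA f g).f a = z.1.1.1.1 from z.1.2).choose_spec

theorem inB_sndB (z : (collageCut f g).car) : (collage.inB f g).f (sndB z) = z.1.1.1.2 :=
  (show ∃ b, (collage.inB f g).f b = z.1.1.1.2 from z.2).choose_spec

variable (f g)

noncomputable def toComma : PHom (collageCut f g) (commaPos f g) where
  f z := ⟨(fstA z, sndB z), by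
    have h : z.1.1.1.1 ≤ z.1.1.1.2 := z.1.1.2
    rwa [← inA_fstA, ← inB_sndB] at h⟩
  mono z z' h := by
    have h₁ : z.1.1.1.1 ≤ z'.1.1.1.1 := h.1
    have h₂ : z.1.1.1.2 ≤ z'.1.1.1.2 := h.2
    rw [← inA_fstA, ← inA_fstA] at h₁
    rw [← inB_sndB, ← inB_sndB] at h₂
    exact ⟨h₁, h₂⟩

theorem inA_comp_commaFst_comp_toComma :
    ((collage.inA f g).comp (commaFst f g)).comp (toComma f g)
      = (relFst _ _).comp ((subIncl _ _).comp (subIncl _ _)) :=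
  PHom.ext inA_fstA

theorem inB_comp_commaSnd_comp_toComma :
    ((collage.inB f g).comp (commaSnd f g)).comp (toComma f g)
      = (relSnd _ _).comp ((subIncl _ _).comp (subIncl _ _)) :=
  PHom.ext inB_sndB

end collageCut

end Collage

theorem OMonad.exists_comma_of_map_le {M : OMonad} (hpre : PreservesPre M)
    (hinj : PreservesInj M) (hstd : UsesStdOrder M) {A B Q : Pos} (f : PHom A Q)
    (g : PHom B Q) {s : (M.obj A).car} {t : (M.obj B).car}
    (h : (M.map f).f s ≤ (M.map g).f t) :
    ∃ w : (M.obj (commaPos f g)).car,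
      (M.map (commaFst f g)).f w = s ∧ (M.map (commaSnd f g)).f w = t := by
  have hA : (M.map (collage.inA f g)).f s ≤ (M.map (collage.inQ f g)).f ((M.map f).f s) := by
    rw [← M.map_comp_apply]
    refine M.map_le_map hstd (fun a => ?_) s
    exact (le_rfl : f.f a ≤ f.f a)
  have hB : (M.map (collage.inQ f g)).f ((M.map g).f t) ≤ (M.map (collage.inB f g)).f t := by
    rw [← M.map_comp_apply]
    refine M.map_le_map hstd (fun b => ?_) t
    exact (le_rfl : g.f b ≤ g.f b)
  obtain ⟨u, hu₁, hu₂⟩ := (hstd _ _ _).1 (hA.trans (((M.map _).mono h).trans hB))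
  obtain ⟨u₁, rfl⟩ := M.exists_lift_of_map_eq hpre (relFst _ _) (collage.inA f g) hu₁
  obtain ⟨u₂, rfl⟩ := M.exists_lift_of_map_eq hpre ((relSnd _ _).comp (subIncl _ _))
    (collage.inB f g) (by rw [M.map_comp_apply]; exact hu₂)
  refine ⟨(M.map (collageCut.toComma f g)).f u₂,
    hinj (collage.inA f g) (fun _ _ h => Sum.inl_injective h) ?_,
    hinj (collage.inB f g) (fun _ _ h => Sum.inr_injective (Sum.inr_injective h)) ?_⟩
  · rw [← M.map_comp_apply, ← M.map_comp_apply, collageCut.inA_comp_commaFst_comp_toComma,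
      M.map_comp_apply, M.map_comp_apply, hu₁]
  · rw [← M.map_comp_apply, ← M.map_comp_apply, collageCut.inB_comp_commaSnd_comp_toComma,
      M.map_comp_apply, M.map_comp_apply, hu₂]

theorem IsBinProd.exists_lift {M : OMonad} {P X Y : OAlg M} (hP : IsBinProd M P X Y)
    {V : Pos} (α : PHom V X.A) (β : PHom V Y.A) :
    ∃ (pX : OAlgHom P X) (pY : OAlgHom P Y) (j : PHom V P.A),
      pX.h.comp j = α ∧ pY.h.comp j = β := by
  obtain ⟨pX, pY, hbij, hle⟩ := hP
  let e := Equiv.ofBijective _ hbij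
  have hX : ∀ v, pX.h.f (e.symm (α.f v, β.f v)) = α.f v :=
    fun v => congrArg Prod.fst (e.apply_symm_apply _)
  have hY : ∀ v, pY.h.f (e.symm (α.f v, β.f v)) = β.f v :=
    fun v => congrArg Prod.snd (e.apply_symm_apply _)
  refine ⟨pX, pY, ⟨fun v => e.symm (α.f v, β.f v), fun v v' h => (hle _ _).2 ?_⟩,
    PHom.ext hX, PHom.ext hY⟩
  rw [hX, hX, hY, hY]
  exact ⟨α.mono h, β.mono h⟩

theorem IsCongOrdP.reduct {M₀ M₁ : OMonad} (ρ : OMonadHom M₀ M₁) {X : OAlg M₁}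
    {co : PreCong X.A} (h : IsCongOrdP M₁ X co) : IsCongOrdP M₀ (ρ.reduct X) co := by
  intro s t hst
  have hle := (ρ.app _).mono hst
  rw [ρ.naturality_apply, ρ.naturality_apply] at hle
  exact h _ _ hle

namespace DenseOver

variable {M₀ M₁ : OMonad} {ρ : OMonadHom M₀ M₁} {C : Set (OAlg M₁)}

-- `M₀` preserves the surjection of `V` onto the image of `j`.
theorem exists_map_eq (hsurj : PreservesSurj M₀) (hdense : DenseOver ρ C) {X : OAlg M₁}
    (hX : X ∈ C) {V : Pos} (j : PHom V X.A) (w : (M₁.obj V).car) :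
    ∃ w₀ : (M₀.obj V).car,
      X.pi.f ((ρ.app X.A).f ((M₀.map j).f w₀)) = X.pi.f ((M₁.map j).f w) := by
  obtain ⟨s₀, hs₀⟩ := hdense X hX _ ((M₁.map j.rangeRestrict).f w)
  obtain ⟨w₀, rfl⟩ := hsurj j.rangeRestrict (fun ⟨_, v, hv⟩ => ⟨v, Subtype.ext hv⟩) s₀
  refine ⟨w₀, ?_⟩
  rwa [← M₀.map_comp_apply, ← M₁.map_comp_apply, subIncl_comp_rangeRestrict] at hs₀

theorem exists_map_eq_pair (hsurj : PreservesSurj M₀) (hdense : DenseOver ρ C)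
    (hC : ∀ A ∈ C, ∀ B ∈ C, ∃ P ∈ C, IsBinProd M₁ P A B) {X Y : OAlg M₁} (hX : X ∈ C)
    (hY : Y ∈ C) {V : Pos} (α : PHom V X.A) (β : PHom V Y.A) (w : (M₁.obj V).car) :
    ∃ w₀ : (M₀.obj V).car,
      X.pi.f ((ρ.app X.A).f ((M₀.map α).f w₀)) = X.pi.f ((M₁.map α).f w) ∧
      Y.pi.f ((ρ.app Y.A).f ((M₀.map β).f w₀)) = Y.pi.f ((M₁.map β).f w) := by
  obtain ⟨P, hP, hprod⟩ := hC X hX Y hY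
  obtain ⟨pX, pY, j, rfl, rfl⟩ := hprod.exists_lift α β
  obtain ⟨w₀, hw₀⟩ := exists_map_eq hsurj hdense hP j w
  refine ⟨w₀, ?_, ?_⟩ <;>
    rw [M₀.map_comp_apply, M₁.map_comp_apply, ← OAlgHom.comm_apply, ← OAlgHom.comm_reduct_apply,
      hw₀]

theorem comm_of_reduct (hsurj : PreservesSurj M₀) (hdense : DenseOver ρ C)
    (hC : ∀ A ∈ C, ∀ B ∈ C, ∃ P ∈ C, IsBinProd M₁ P A B) {X Y : OAlg M₁} (hX : X ∈ C)
    (hY : Y ∈ C) (φ : OAlgHom (ρ.reduct X) (ρ.reduct Y)) :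
    φ.h.comp X.pi = Y.pi.comp (M₁.map φ.h) := by
  ext s
  obtain ⟨w₀, hwX, hwY⟩ := hdense.exists_map_eq_pair hsurj hC hX hY (PHom.id X.A) φ.h s
  rw [M₀.map_id_apply, M₁.map_id_apply] at hwX
  exact (congrArg φ.h.f hwX).symm.trans ((φ.comm_apply w₀).trans hwY)

theorem isCongOrdP_of_reduct (hsurj₀ : PreservesSurj M₀) (hstd₀ : UsesStdOrder M₀)
    (hpre₁ : PreservesPre M₁) (hinj₁ : PreservesInj M₁) (hstd₁ : UsesStdOrder M₁)
    (hdense : DenseOver ρ C) (hC : ∀ A ∈ C, ∀ B ∈ C, ∃ P ∈ C, IsBinProd M₁ P A B)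
    {X : OAlg M₁} (hX : X ∈ C) {co : PreCong X.A} (h : IsCongOrdP M₀ (ρ.reduct X) co) :
    IsCongOrdP M₁ X co := by
  intro s t hst
  obtain ⟨w, rfl, rfl⟩ := OMonad.exists_comma_of_map_le hpre₁ hinj₁ hstd₁ _ _ hst
  obtain ⟨w₀, hfst, hsnd⟩ := hdense.exists_map_eq_pair hsurj₀ hC hX hX
    (commaFst (quotHom co) (quotHom co)) (commaSnd (quotHom co) (quotHom co)) w
  have hle : (M₀.map (quotHom co)).f ((M₀.map (commaFst _ _)).f w₀)
      ≤ (M₀.map (quotHom co)).f ((M₀.map (commaSnd _ _)).f w₀) := by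
    rw [← M₀.map_comp_apply, ← M₀.map_comp_apply]
    exact M₀.map_le_map hstd₀ (fun p : (commaPos _ _).car => p.2) w₀
  rw [← hfst, ← hsnd]
  exact h _ _ hle

end DenseOver

/-- Dense reducts.  Let `ρ : M₀ ⇒ M₁` be a morphism of monads that is dense over a
class `C` of `M₁`-algebras closed under binary products.  Then:
(a) any two algebras in `C` with the same `M₀`-reduct have equal products;
(b) every morphism of the `M₀`-reducts of two algebras of `C` is also a morphism of
`M₁`-algebras;
(c) a relation is a congruence ordering on an algebra `X ∈ C` iff it is a congruence
ordering on the `M₀`-reduct of `X`. -/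
theorem dense_reducts (M₀ M₁ : OMonad) (h₀ : Convention M₀) (h₁ : Convention M₁)
    (ρ : OMonadHom M₀ M₁) (C : Set (OAlg M₁))
    (hC : ∀ A ∈ C, ∀ B ∈ C, ∃ P ∈ C, IsBinProd M₁ P A B)
    (hdense : DenseOver ρ C) :
    (∀ (A : Pos) (p₁ p₂ : PHom (M₁.obj A) A)
        (u₁ : p₁.comp (M₁.sing A) = PHom.id A)
        (a₁ : p₁.comp (M₁.map p₁) = p₁.comp (M₁.flat A))
        (u₂ : p₂.comp (M₁.sing A) = PHom.id A)
        (a₂ : p₂.comp (M₁.map p₂) = p₂.comp (M₁.flat A)),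
        (⟨A, p₁, u₁, a₁⟩ : OAlg M₁) ∈ C → (⟨A, p₂, u₂, a₂⟩ : OAlg M₁) ∈ C →
        p₁.comp (ρ.app A) = p₂.comp (ρ.app A) → p₁ = p₂) ∧
    (∀ X ∈ C, ∀ Y ∈ C, ∀ φ : OAlgHom (ρ.reduct X) (ρ.reduct Y),
        φ.h.comp X.pi = Y.pi.comp (M₁.map φ.h)) ∧
    (∀ X ∈ C, ∀ r : X.A.car → X.A.car → Prop,
        IsCongruenceOrdering M₁ X r ↔ IsCongruenceOrdering M₀ (ρ.reduct X) r) := by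
  obtain ⟨-, hsurj₀, -, -, hstd₀⟩ := h₀
  obtain ⟨hinj₁, -, -, hpre₁, hstd₁⟩ := h₁
  have hmor : ∀ X ∈ C, ∀ Y ∈ C, ∀ φ : OAlgHom (ρ.reduct X) (ρ.reduct Y),
      φ.h.comp X.pi = Y.pi.comp (M₁.map φ.h) :=
    fun X hX Y hY φ => hdense.comm_of_reduct hsurj₀ hC hX hY φ
  refine ⟨?_, hmor, ?_⟩
  · intro A p₁ p₂ u₁ a₁ u₂ a₂ hX₁ hX₂ hρ
    -- the identity of `A` is a morphism between the two equal reducts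
    have hid := hmor _ hX₁ _ hX₂ ⟨PHom.id A, PHom.ext fun (z : (M₀.obj A).car) => by
      show p₁.f ((ρ.app A).f z) = p₂.f ((ρ.app A).f ((M₀.map (PHom.id A)).f z))
      rw [M₀.map_id_apply]
      exact congrArg (·.f z) hρ⟩
    ext s
    exact (congrArg (·.f s) hid).trans (congrArg p₂.f (M₁.map_id_apply A s))
  · intro X hX r
    exact ⟨fun ⟨h1, h2, h3, h⟩ => ⟨h1, h2, h3, h.reduct ρ⟩,
      fun ⟨h1, h2, h3, h⟩ => ⟨h1, h2, h3,
        hdense.isCongOrdP_of_reduct hsurj₀ hstd₀ hpre₁ hinj₁ hstd₁ hC hX h⟩⟩
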